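/- arXiv:2002.12865 — 5 statements merged into one kernel-verified Lean document; each statement's English description precedes it below -/
import Mathlib

section
/- The function φ(a,t) = 4a² − 4a⁴ − t² − 4a²t, defined on the region Ω = {(a,t) : 0 ≤ a ≤ 1, −(1−a²)/2 ≤ t ≤ √(1−a²)/√3}, satisfies φ(a,t) ≤ 36/25 for all (a,t) ∈ Ω. -/
theorem stmt_0 (a t : ℝ) (ha : 0 ≤ a) (ha1 : a ≤ 1)
    (ht1 : -(1 - a^2)/2 ≤ t) (ht2 : t ≤ Real.sqrt (1 - a^2) / Real.sqrt 3) :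
    4*a^2 - 4*a^4 - t^2 - 4*a^2*t ≤ 36/25 := by
  have hs : 0 ≤ t + (1 - a^2)/2 := by linarith
  nlinarith [sq_nonneg (5*a^2 - 13/5), sq_nonneg (t + (1-a^2)/2),
    sq_nonneg (t + (1-a^2)/2 + (5*a^2-1)/2), mul_nonneg hs (sq_nonneg a),
    mul_nonneg hs hs, sq_nonneg a]
end

section
/- The maximum of φ(a,t) = 4a² − 4a⁴ − t² − 4a²t over the region Ω = {(a,t) : 0 ≤ a ≤ 1, −(1−a²)/2 ≤ t ≤ √(1−a²)/√3} equals 36/25, attained at a = √13/5 and t = −(1−a²)/2 = −6/25. -/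
theorem stmt_1 :
    IsMaxOn (fun p : ℝ × ℝ => 4*p.1^2 - 4*p.1^4 - p.2^2 - 4*p.1^2*p.2)
      {p : ℝ × ℝ | 0 ≤ p.1 ∧ p.1 ≤ 1 ∧ -(1 - p.1^2)/2 ≤ p.2 ∧
        p.2 ≤ Real.sqrt (1 - p.1^2) / Real.sqrt 3}
      (Real.sqrt 13 / 5, -6/25) ∧
    (Real.sqrt 13 / 5, (-6/25 : ℝ)) ∈
      {p : ℝ × ℝ | 0 ≤ p.1 ∧ p.1 ≤ 1 ∧ -(1 - p.1^2)/2 ≤ p.2 ∧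
        p.2 ≤ Real.sqrt (1 - p.1^2) / Real.sqrt 3} ∧
    (fun p : ℝ × ℝ => 4*p.1^2 - 4*p.1^4 - p.2^2 - 4*p.1^2*p.2)
      (Real.sqrt 13 / 5, -6/25) = 36/25 ∧
    -(1 - (Real.sqrt 13 / 5)^2)/2 = (-6/25 : ℝ) := by
  have h13 : Real.sqrt 13 ^ 2 = 13 := Real.sq_sqrt (by norm_num)
  have hs13 : (0:ℝ) ≤ Real.sqrt 13 := Real.sqrt_nonneg _
  have ha2 : (Real.sqrt 13 / 5)^2 = 13/25 := by
    rw [div_pow, h13]; norm_num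
  have hval : (fun p : ℝ × ℝ => 4*p.1^2 - 4*p.1^4 - p.2^2 - 4*p.1^2*p.2)
      (Real.sqrt 13 / 5, -6/25) = 36/25 := by
    simp only
    have h4 : (Real.sqrt 13 / 5)^4 = 169/625 := by
      have : (Real.sqrt 13 / 5)^4 = ((Real.sqrt 13 / 5)^2)^2 := by ring
      rw [this, ha2]; norm_num
    rw [ha2, h4]; norm_num
  have hmem : (Real.sqrt 13 / 5, (-6/25 : ℝ)) ∈
      {p : ℝ × ℝ | 0 ≤ p.1 ∧ p.1 ≤ 1 ∧ -(1 - p.1^2)/2 ≤ p.2 ∧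
        p.2 ≤ Real.sqrt (1 - p.1^2) / Real.sqrt 3} := by
    refine ⟨by positivity, ?_, ?_, ?_⟩
    · nlinarith [sq_nonneg (Real.sqrt 13 / 5 - 1)]
    · rw [ha2]; norm_num
    · have : (0:ℝ) ≤ Real.sqrt (1 - (Real.sqrt 13 / 5)^2) / Real.sqrt 3 := by
        positivity
      linarith
  refine ⟨?_, hmem, hval, by rw [ha2]; norm_num⟩
  intro p hp
  obtain ⟨_, _, h2, _⟩ := hp
  simp only [Set.mem_setOf_eq, hval]
  nlinarith [sq_nonneg (25*p.1^2-13), sq_nonneg (p.2+2*p.1^2),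
    mul_nonneg (by linarith : (0:ℝ) ≤ 2*p.2+1-p.1^2) (by linarith : (0:ℝ) ≤ 2*p.2+1-p.1^2),
    sq_nonneg (5*p.1^2-1+2*p.2)]
end

section
/- For all real a with 0 ≤ a ≤ 1, φ(a, √(1−a²)/√3) = (1/3)(−12a⁴ + 13a² − 1) − (4a²/√3)·√(1−a²) < 36/25. -/
theorem stmt_3 (a : ℝ) (ha : 0 ≤ a) (ha1 : a ≤ 1) :
    4*a^2 - 4*a^4 - (Real.sqrt (1 - a^2) / Real.sqrt 3)^2
      - 4*a^2*(Real.sqrt (1 - a^2) / Real.sqrt 3)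
      = (1/3)*(-12*a^4 + 13*a^2 - 1) - (4*a^2/Real.sqrt 3) * Real.sqrt (1 - a^2) ∧
    (1/3)*(-12*a^4 + 13*a^2 - 1) - (4*a^2/Real.sqrt 3) * Real.sqrt (1 - a^2) < 36/25 := by
  have h1 : (0:ℝ) ≤ 1 - a^2 := by nlinarith
  have hs : Real.sqrt (1 - a^2) ^ 2 = 1 - a^2 := Real.sq_sqrt h1
  have h3 : Real.sqrt 3 ^ 2 = 3 := Real.sq_sqrt (by norm_num)
  have h3pos : (0:ℝ) < Real.sqrt 3 := Real.sqrt_pos.mpr (by norm_num)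
  have hsn : 0 ≤ Real.sqrt (1 - a^2) := Real.sqrt_nonneg _
  constructor
  · field_simp
    nlinarith [hs, h3]
  · have hterm : 0 ≤ 4*a^2/Real.sqrt 3 * Real.sqrt (1 - a^2) := by positivity
    nlinarith [hterm, sq_nonneg (a^2 - 13/24)]
end

section
/- Let a ∈ [0,1] be real and ω₁₃ ∈ ℂ with Re(ω₁₃) = t, where −(1−a²)/2 ≤ t ≤ (1/√3)√(1−a²). Then 1/9 + (4/3)a² − (4/3)a⁴ − (1/3)t² − (4/3)a²t ≤ 133/225. -/
theorem stmt_9 (a t : ℝ) (ha : 0 ≤ a) (ha1 : a ≤ 1) (ω₁₃ : ℂ) (hre : ω₁₃.re = t)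
    (ht1 : -(1 - a^2)/2 ≤ t) (ht2 : t ≤ (1/Real.sqrt 3) * Real.sqrt (1 - a^2)) :
    1/9 + (4/3)*a^2 - (4/3)*a^4 - (1/3)*t^2 - (4/3)*a^2*t ≤ 133/225 := by
  have hs : 0 ≤ t + (1 - a^2)/2 := by linarith
  have hu : a^2 ≤ 1 := by nlinarith
  nlinarith [sq_nonneg (a^2 - 13/25), sq_nonneg (t + (1-a^2)/2),
    mul_nonneg hs hs, mul_nonneg hs (sq_nonneg (a^2 - 13/25)),
    sq_nonneg (t + (1-a^2)/2 - (1 - 5*a^2)/2),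
    mul_nonneg hs (by linarith : (0:ℝ) ≤ 1 - a^2),
    mul_nonneg hs (sq_nonneg a)]
end

section
/- Let ω₁₁, ω₁₃, ω₃₃ ∈ ℂ with ω₁₁ real, 0 ≤ ω₁₁ ≤ 1, satisfying: (i) |ω₁₁x₁ + ω₁₃x₃|² + 3|ω₁₃x₁ + ω₃₃x₃|² ≤ |x₁|² + |x₃|²/3 for all x₁, x₃ ∈ ℂ, and (ii) |2ω₁₃ − ω₁₁²| ≤ 1. Then |ω₃₃ + 2ω₁₁ω₁₃| ≤ √133/15. -/
/-!
Test Grunsky's inequality at `(x₁, x₃) = (2ω₁₁, 1)`: with `u = 2ω₁₁² + ω₁₃` it gives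
`‖u‖² + 3‖ω₃₃ + 2ω₁₁ω₁₃‖² ≤ 4ω₁₁² + 1/3`. Since `2u = 5ω₁₁² + (2ω₁₃ - ω₁₁²)`, the bound
`‖2ω₁₃ - ω₁₁²‖ ≤ 1` forces `‖u‖ ≥ (5ω₁₁² - 1)/2`, and what remains is
`4s + 1/3 - ((5s - 1)/2)² = 133/75 - (5s/2 - 13/10)²` for `s = ω₁₁²`; equality holds at `s = 13/25`.
-/

theorem five_mul_norm_le_two_mul_norm_two_mul_add {𝕜 : Type*} [RCLike 𝕜] (x w : 𝕜) :
    5 * ‖x‖ ≤ 2 * ‖2 * x + w‖ + ‖2 * w - x‖ := by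
  have h : 5 * x = 2 * (2 * x + w) - (2 * w - x) := by ring
  calc 5 * ‖x‖ = ‖5 * x‖ := by rw [norm_mul, RCLike.norm_ofNat]
    _ ≤ ‖2 * (2 * x + w)‖ + ‖2 * w - x‖ := h ▸ norm_sub_le _ _
    _ = 2 * ‖2 * x + w‖ + ‖2 * w - x‖ := by rw [norm_mul, RCLike.norm_ofNat]

theorem sq_le_of_add_three_mul_sq_le {s r q : ℝ} (hsr : 5 * s ≤ 2 * r + 1)
    (h : r ^ 2 + 3 * q ^ 2 ≤ 4 * s + 1 / 3) : q ^ 2 ≤ 133 / 225 := by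
  rcases le_or_gt (5 * s) 1 with hs | hs
  · nlinarith [sq_nonneg r]
  · have hr2 : (5 * s - 1) ^ 2 ≤ (2 * r) ^ 2 := pow_le_pow_left₀ (by linarith) (by linarith) 2
    nlinarith [sq_nonneg (5 * s / 2 - 13 / 10)]

theorem stmt_10_general (ω₁₁ : ℝ) (ω₁₃ ω₃₃ : ℂ)
    (hGrunsky : ∀ x₁ x₃ : ℂ, ‖(ω₁₁ : ℂ)*x₁ + ω₁₃*x₃‖^2
        + 3 * ‖ω₁₃*x₁ + ω₃₃*x₃‖^2
        ≤ ‖x₁‖^2 + ‖x₃‖^2 / 3)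
    (hcl : ‖2*ω₁₃ - (ω₁₁ : ℂ)^2‖ ≤ 1) :
    ‖ω₃₃ + 2*(ω₁₁ : ℂ)*ω₁₃‖ ≤ Real.sqrt 133 / 15 := by
  have hnorm : ‖(ω₁₁ : ℂ) ^ 2‖ = ω₁₁ ^ 2 := by
    rw [norm_pow, Complex.norm_real, Real.norm_eq_abs, sq_abs]
  have htest : ‖2 * (ω₁₁ : ℂ) ^ 2 + ω₁₃‖ ^ 2 + 3 * ‖ω₃₃ + 2 * (ω₁₁ : ℂ) * ω₁₃‖ ^ 2
      ≤ 4 * ω₁₁ ^ 2 + 1 / 3 := by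
    have h := hGrunsky (2 * ω₁₁) 1
    rw [show (ω₁₁ : ℂ) * (2 * ω₁₁) + ω₁₃ * 1 = 2 * (ω₁₁ : ℂ) ^ 2 + ω₁₃ by ring,
      show ω₁₃ * (2 * ω₁₁) + ω₃₃ * 1 = ω₃₃ + 2 * (ω₁₁ : ℂ) * ω₁₃ by ring,
      norm_mul, Complex.norm_real, Real.norm_eq_abs, mul_pow, sq_abs, norm_one,
      RCLike.norm_ofNat] at h
    linarith
  have hu : 5 * ω₁₁ ^ 2 ≤ 2 * ‖2 * (ω₁₁ : ℂ) ^ 2 + ω₁₃‖ + 1 := by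
    have h := five_mul_norm_le_two_mul_norm_two_mul_add ((ω₁₁ : ℂ) ^ 2) ω₁₃
    rw [hnorm] at h
    linarith
  have hv := sq_le_of_add_three_mul_sq_le hu htest
  rw [le_div_iff₀ (by norm_num), Real.le_sqrt (by positivity) (by norm_num)]
  nlinarith

theorem stmt_10 (ω₁₁ : ℝ) (h0 : 0 ≤ ω₁₁) (h1 : ω₁₁ ≤ 1) (ω₁₃ ω₃₃ : ℂ)
    (hGrunsky : ∀ x₁ x₃ : ℂ, ‖(ω₁₁ : ℂ)*x₁ + ω₁₃*x₃‖^2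
        + 3 * ‖ω₁₃*x₁ + ω₃₃*x₃‖^2
        ≤ ‖x₁‖^2 + ‖x₃‖^2 / 3)
    (hcl : ‖2*ω₁₃ - (ω₁₁ : ℂ)^2‖ ≤ 1) :
    ‖ω₃₃ + 2*(ω₁₁ : ℂ)*ω₁₃‖ ≤ Real.sqrt 133 / 15 :=
  stmt_10_general ω₁₁ ω₁₃ ω₃₃ hGrunsky hcl
end
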